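/- Let G = (V, E) be a finite connected graph, and for distinct v, w ∈ V let E_{v,w} ∈ SL_V(ℤ) be the elementary matrix with 1's on the diagonal and in position (v,w). Let S_G = { E_{v,w}, E_{w,v} : (v,w) ∈ E }. If v, w ∈ V are at distance at most 2^m in G, then E_{v,w} is a product of at most 4^m elements of S_G and their inverses. Consequently every elementary matrix E_{v,w} lies in the ball of radius 4^{⌈log₂ diam(G)⌉} with respect to S_G. -/

import Mathlib

open Matrix

/-- The ball of radius `n` in the word metric with respect to a set `S`. -/
def wordBall {G : Type*} [Group G] (S : Set G) (n : ℕ) : Set G :=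
  {x | ∃ l : List G, l.length ≤ n ∧ (∀ y ∈ l, y ∈ S ∪ S⁻¹) ∧ l.prod = x}

/-- The elementary matrix `E_{v,w}` (1's on the diagonal and in position `(v,w)`)
as an element of `SL_V(ℤ)`. -/
def elemSL {V : Type*} [Fintype V] [DecidableEq V] (v w : V) (h : v ≠ w) :
    SpecialLinearGroup V ℤ :=
  ⟨Matrix.transvection v w 1, Matrix.det_transvection_of_ne v w h 1⟩

/-!
If `x` is the midpoint of a shortest path from `v` to `w`, then `E_{v,w}` is the commutator
`[E_{v,x}, E_{x,w}]`, a word of length four in two elementary matrices whose indices are at half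
the distance. Halving the distance `m` times reaches adjacent vertices, so `E_{v,w}` is a word of
length `4^m` in the generators once `d(v,w) ≤ 2^m`; and `d(v,w) ≤ diam G ≤ 2^⌈log₂ diam G⌉`.
-/

section WordBall

variable {H : Type*} [Group H] {S : Set H} {x y : H} {n n' : ℕ}

lemma wordBall_mono (h : n ≤ n') : wordBall S n ⊆ wordBall S n' := by
  rintro x ⟨l, hl, hmem, hprod⟩
  exact ⟨l, hl.trans h, hmem, hprod⟩

lemma mem_wordBall_one_of_mem (hx : x ∈ S) : x ∈ wordBall S 1 :=
  ⟨[x], by simp, by simpa using Or.inl hx, by simp⟩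

lemma mul_mem_wordBall (hx : x ∈ wordBall S n) (hy : y ∈ wordBall S n') :
    x * y ∈ wordBall S (n + n') := by
  obtain ⟨l, hl, hmem, rfl⟩ := hx
  obtain ⟨l', hl', hmem', rfl⟩ := hy
  refine ⟨l ++ l', by simpa using Nat.add_le_add hl hl', ?_, List.prod_append⟩
  simp only [List.mem_append]
  rintro z (hz | hz)
  exacts [hmem z hz, hmem' z hz]

lemma inv_mem_wordBall (hx : x ∈ wordBall S n) : x⁻¹ ∈ wordBall S n := by
  obtain ⟨l, hl, hmem, rfl⟩ := hx
  refine ⟨(l.map Inv.inv).reverse, by simpa using hl, ?_, List.prod_inv_reverse l ▸ rfl⟩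
  simp only [List.mem_reverse, List.mem_map]
  rintro _ ⟨z, hz, rfl⟩
  rcases hmem z hz with h | h
  · exact Or.inr (by simpa using h)
  · exact Or.inl (by simpa using h)

lemma commutator_mem_wordBall (hx : x ∈ wordBall S n) (hy : y ∈ wordBall S n) :
    x⁻¹ * y⁻¹ * x * y ∈ wordBall S (4 * n) := by
  rw [show 4 * n = n + n + n + n by ring]
  exact mul_mem_wordBall (mul_mem_wordBall (mul_mem_wordBall
    (inv_mem_wordBall hx) (inv_mem_wordBall hy)) hx) hy

end WordBall

lemma SimpleGraph.Reachable.exists_dist_le_of_dist_le_add {V : Type*} {G : SimpleGraph V}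
    {v w : V} (hvw : G.Reachable v w) {k l : ℕ} (h : G.dist v w ≤ k + l) :
    ∃ x, G.dist v x ≤ k ∧ G.dist x w ≤ l := by
  obtain ⟨p, hp⟩ := hvw.exists_walk_length_eq_dist
  refine ⟨p.getVert k, ?_, ?_⟩
  · calc G.dist v (p.getVert k) ≤ (p.take k).length := SimpleGraph.dist_le _
      _ ≤ k := by rw [p.take_length]; exact min_le_left _ _
  · calc G.dist (p.getVert k) w ≤ (p.drop k).length := SimpleGraph.dist_le _
      _ ≤ l := by rw [p.drop_length]; omega

section Elementary

variable {V : Type*} [Fintype V] [DecidableEq V]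

lemma transvection_mul_transvection_of_ne {R : Type*} [CommRing R] {v x w : V}
    (hvx : v ≠ x) (hvw : v ≠ w) (c d : R) :
    transvection v x c * transvection x w d =
      transvection x w d * (transvection v x c * transvection v w (c * d)) := by
  simp only [transvection, mul_add, add_mul, one_mul, mul_one, single_mul_single_same,
    single_mul_single_of_ne _ v x v hvx.symm, single_mul_single_of_ne _ x w v hvw.symm,
    add_zero]
  abel

lemma elemSL_eq_commutator {v x w : V} (hvx : v ≠ x) (hxw : x ≠ w) (hvw : v ≠ w) :
    elemSL v w hvw = (elemSL v x hvx)⁻¹ * (elemSL x w hxw)⁻¹ *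
      elemSL v x hvx * elemSL x w hxw := by
  have hmul : elemSL v x hvx * elemSL x w hxw =
      elemSL x w hxw * (elemSL v x hvx * elemSL v w hvw) :=
    Subtype.ext (transvection_mul_transvection_of_ne hvx hvw (1 : ℤ) 1)
  rw [mul_assoc, mul_assoc, hmul, inv_mul_cancel_left, inv_mul_cancel_left]

lemma elemSL_mem_wordBall_of_dist_le {G : SimpleGraph V} (hconn : G.Connected)
    {S : Set (SpecialLinearGroup V ℤ)} (hS : ∀ a b (hab : G.Adj a b), elemSL a b hab.ne ∈ S)
    (m : ℕ) {v w : V} (hvw : v ≠ w) (hd : G.dist v w ≤ 2 ^ m) :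
    elemSL v w hvw ∈ wordBall S (4 ^ m) := by
  induction m generalizing v w with
  | zero =>
    have hadj : G.Adj v w := SimpleGraph.dist_eq_one_iff_adj.mp <| by
      have := hconn.pos_dist_of_ne hvw
      omega
    exact mem_wordBall_one_of_mem (hS v w hadj)
  | succ m ih =>
    rcases le_or_gt (G.dist v w) (2 ^ m) with hle | hlt
    · exact wordBall_mono (Nat.pow_le_pow_right (by norm_num) m.le_succ) (ih hvw hle)
    obtain ⟨x, hdvx, hdxw⟩ := (hconn v w).exists_dist_le_of_dist_le_add (k := 2 ^ m) (l := 2 ^ m)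
      (by rw [← two_mul, ← pow_succ']; exact hd)
    have hvx : v ≠ x := by rintro rfl; omega
    have hxw : x ≠ w := by rintro rfl; omega
    rw [elemSL_eq_commutator hvx hxw hvw, pow_succ']
    exact commutator_mem_wordBall (ih hvx hdvx) (ih hxw hdxw)

end Elementary

/-- for a finite connected graph `G` on `V`, with
`S_G = {E_{v,w}, E_{w,v} : (v,w) ∈ E(G)}`: if `v, w` are at distance at most
`2^m` in `G` then `E_{v,w}` is a product of at most `4^m` elements of `S_G` and
their inverses; consequently every `E_{v,w}` lies in the ball of radius
`4^{⌈log₂ diam(G)⌉}` with respect to `S_G`. -/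
theorem elementary_matrices_short_words {V : Type*} [Fintype V] [DecidableEq V]
    (G : SimpleGraph V) (hconn : G.Connected) :
    (∀ (v w : V) (hvw : v ≠ w) (m : ℕ), G.dist v w ≤ 2 ^ m →
      elemSL v w hvw ∈ wordBall
        {x : SpecialLinearGroup V ℤ | ∃ (a b : V) (hab : G.Adj a b),
          x = elemSL a b hab.ne ∨ x = elemSL b a hab.ne'} (4 ^ m)) ∧
    (∀ (v w : V) (hvw : v ≠ w),
      elemSL v w hvw ∈ wordBall
        {x : SpecialLinearGroup V ℤ | ∃ (a b : V) (hab : G.Adj a b),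
          x = elemSL a b hab.ne ∨ x = elemSL b a hab.ne'}
        (4 ^ Nat.clog 2 G.diam)) := by
  have hS : ∀ a b (hab : G.Adj a b), elemSL a b hab.ne ∈
      {x : SpecialLinearGroup V ℤ | ∃ (a b : V) (hab : G.Adj a b),
        x = elemSL a b hab.ne ∨ x = elemSL b a hab.ne'} :=
    fun a b hab => ⟨a, b, hab, Or.inl rfl⟩
  have short := fun (v w : V) (hvw : v ≠ w) (m : ℕ) =>
    elemSL_mem_wordBall_of_dist_le hconn hS m hvw
  refine ⟨short, fun v w hvw => short v w hvw _ ?_⟩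
  have : Nonempty V := hconn.nonempty
  calc G.dist v w ≤ G.diam := SimpleGraph.dist_le_diam (G.connected_iff_ediam_ne_top.mp hconn)
    _ ≤ 2 ^ Nat.clog 2 G.diam := Nat.le_pow_clog one_lt_two _
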